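/- For k ≥ 4, let T_k be the tree obtained from the star K_{1,k} by subdividing every edge exactly three times; explicitly T_k has center v and paths v u_i v_i w_i x_i for i = 1,...,k. Then the induced matching number of T_k equals k + 1. -/

import Mathlib

/-!
Every edge of `T_k` is either a center edge `v u_i` (any two of these share `v`) or lies on one
of the `k` paths `u_i v_i w_i x_i` (any two edges of such a path share a vertex or are joined by
an edge). An induced matching therefore takes at most one edge from each of these `k + 1`
classes, and `v u_1` together with the `k` pendant edges `w_i x_i` attains the bound.
-/

variable {V : Type*}

/-- `S` is a total dominating set of `G`: every vertex has a neighbor in `S`. -/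
def isTDSet (G : SimpleGraph V) (S : Set V) : Prop := ∀ v : V, ∃ u ∈ S, G.Adj v u

/-- `S` is a minimal total dominating set of `G`. -/
def isMinTDSet (G : SimpleGraph V) (S : Set V) : Prop :=
  isTDSet G S ∧ ∀ T : Set V, T ⊂ S → ¬ isTDSet G T

/-- Upper total domination number `Γ_t`. -/
noncomputable def upperTD (G : SimpleGraph V) [Fintype V] : ℕ :=
  sSup {n | ∃ S : Finset V, isMinTDSet G ↑S ∧ S.card = n}

/-- Total domination number `γ_t`. -/
noncomputable def totalDomNum (G : SimpleGraph V) [Fintype V] : ℕ :=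
  sInf {n | ∃ S : Finset V, isTDSet G ↑S ∧ S.card = n}

/-- `S` is an open-open irredundant set: each `v ∈ S` has a neighbor not adjacent
to any other vertex of `S`, i.e. `N(v) \ N(S \ {v}) ≠ ∅`. -/
def isOOIrr (G : SimpleGraph V) (S : Set V) : Prop :=
  ∀ v ∈ S, ∃ w, G.Adj v w ∧ ∀ u ∈ S, u ≠ v → ¬ G.Adj u w

/-- Open-open irredundance number `OOIR`. -/
noncomputable def ooirNum (G : SimpleGraph V) [Fintype V] : ℕ :=
  sSup {n | ∃ S : Finset V, isOOIrr G ↑S ∧ S.card = n}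

/-- `M` is an induced matching: a set of edges of `G` whose endpoints induce a
1-regular subgraph (no two distinct edges share or join endpoints). -/
def isInducedMatching (G : SimpleGraph V) (M : Set (Sym2 V)) : Prop :=
  (∀ e ∈ M, e ∈ G.edgeSet) ∧
  ∀ e ∈ M, ∀ f ∈ M, e ≠ f → ∀ u ∈ e, ∀ v ∈ f, u ≠ v ∧ ¬ G.Adj u v

/-- Induced matching number `ν_I`. -/
noncomputable def inducedMatchingNum (G : SimpleGraph V) [Fintype V] : ℕ :=
  sSup {n | ∃ M : Finset (Sym2 V), isInducedMatching G ↑M ∧ M.card = n}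

/-- `L` is a total dominating sequence of `G`. -/
def isTDSeq (G : SimpleGraph V) (L : List V) : Prop :=
  L.Nodup ∧ isTDSet G {v | v ∈ L} ∧
  ∀ (i : ℕ) (h : i < L.length), ∃ w, G.Adj L[i] w ∧ ∀ u ∈ L.take i, ¬ G.Adj u w

/-- Grundy total domination number. -/
noncomputable def grundyTD (G : SimpleGraph V) [Fintype V] : ℕ :=
  sSup {n | ∃ L : List V, isTDSeq G L ∧ L.length = n}

/-- The tree obtained from `K_{1,k}` by subdividing every edge three times: center
`v = Sum.inl ()` and paths `v, (i,0), (i,1), (i,2), (i,3)`, i.e. `v u_i v_i w_i x_i`. -/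
def T3star (k : ℕ) : SimpleGraph (Unit ⊕ Fin k × Fin 4) :=
  SimpleGraph.fromRel (fun a b =>
    match a, b with
    | Sum.inl _, Sum.inr p => p.2 = 0
    | Sum.inr p, Sum.inr q => p.1 = q.1 ∧ (p.2 : ℕ) + 1 = (q.2 : ℕ)
    | _, _ => False)

def edgesSeparated (G : SimpleGraph V) (e f : Sym2 V) : Prop :=
  ∀ u ∈ e, ∀ w ∈ f, u ≠ w ∧ ¬ G.Adj u w

theorem edgesSeparated.symm {G : SimpleGraph V} {e f : Sym2 V} (h : edgesSeparated G e f) :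
    edgesSeparated G f e := fun w hw u hu =>
  ⟨(h u hu w hw).1.symm, fun hadj => (h u hu w hw).2 hadj.symm⟩

theorem isInducedMatching_iff {G : SimpleGraph V} {M : Set (Sym2 V)} :
    isInducedMatching G M ↔ M ⊆ G.edgeSet ∧ M.Pairwise (edgesSeparated G) :=
  Iff.rfl

theorem isInducedMatching.injOn {β : Type*} {G : SimpleGraph V} {M : Set (Sym2 V)}
    (hM : isInducedMatching G M) {φ : Sym2 V → β}
    (hφ : ∀ e ∈ G.edgeSet, ∀ f ∈ G.edgeSet, φ e = φ f → ∃ u ∈ e, ∃ w ∈ f, u = w ∨ G.Adj u w) :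
    Set.InjOn φ M := by
  intro e he f hf hef
  by_contra hne
  obtain ⟨u, hu, w, hw, hclose⟩ := hφ e (hM.1 e he) f (hM.1 f hf) hef
  obtain ⟨hne, hnadj⟩ := hM.2 e he f hf hne u hu w hw
  exact hclose.elim hne hnadj

theorem isInducedMatching.card_le {β : Type*} [Fintype β] {G : SimpleGraph V}
    {M : Finset (Sym2 V)} (hM : isInducedMatching G M) {φ : Sym2 V → β}
    (hφ : ∀ e ∈ G.edgeSet, ∀ f ∈ G.edgeSet, φ e = φ f → ∃ u ∈ e, ∃ w ∈ f, u = w ∨ G.Adj u w) :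
    M.card ≤ Fintype.card β :=
  Finset.card_le_card_of_injOn φ (fun _ _ => Finset.mem_coe.2 (Finset.mem_univ _))
    (hM.injOn hφ)

theorem inducedMatchingNum_eq [Fintype V] {G : SimpleGraph V} {n : ℕ}
    (hle : ∀ M : Finset (Sym2 V), isInducedMatching G M → M.card ≤ n)
    {M : Finset (Sym2 V)} (hM : isInducedMatching G M) (hcard : M.card = n) :
    inducedMatchingNum G = n :=
  IsGreatest.csSup_eq ⟨⟨M, hM, hcard⟩, by rintro _ ⟨N, hN, rfl⟩; exact hle N hN⟩

namespace T3star

variable {k : ℕ}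

@[simp]
theorem adj_inl_inr (i : Fin k) (j : Fin 4) :
    (T3star k).Adj (.inl ()) (.inr (i, j)) ↔ j = 0 := by
  simp [T3star]

@[simp]
theorem adj_inr_inl (i : Fin k) (j : Fin 4) :
    (T3star k).Adj (.inr (i, j)) (.inl ()) ↔ j = 0 := by
  simp [T3star]

@[simp]
theorem not_adj_inl_inl (u u' : Unit) : ¬ (T3star k).Adj (.inl u) (.inl u') := by
  simp [T3star]

@[simp]
theorem adj_inr_inr (i i' : Fin k) (a b : Fin 4) :
    (T3star k).Adj (.inr (i, a)) (.inr (i', b)) ↔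
      i = i' ∧ ((a : ℕ) + 1 = b ∨ (b : ℕ) + 1 = a) := by
  simp only [T3star, SimpleGraph.fromRel_adj]
  constructor
  · rintro ⟨-, ⟨rfl, h⟩ | ⟨rfl, h⟩⟩ <;> simp [h]
  · rintro ⟨rfl, h⟩
    exact ⟨by simp only [ne_eq, Sum.inr.injEq, Prod.mk.injEq, true_and]; omega, by simpa using h⟩

theorem edge_cases {e : Sym2 (Unit ⊕ Fin k × Fin 4)} (he : e ∈ (T3star k).edgeSet) :
    (∃ i, e = s(.inl (), .inr (i, 0))) ∨
      ∃ i, ∃ a b : Fin 4, (a : ℕ) + 1 = b ∧ e = s(.inr (i, a), .inr (i, b)) := by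
  induction e using Sym2.ind with
  | _ x y =>
    rw [SimpleGraph.mem_edgeSet] at he
    rcases x with ⟨⟨⟩⟩ | ⟨i, a⟩ <;> rcases y with ⟨⟨⟩⟩ | ⟨i', b⟩
    · simp at he
    · simp only [adj_inl_inr] at he
      exact .inl ⟨i', by rw [he]⟩
    · simp only [adj_inr_inl] at he
      exact .inl ⟨i, by rw [he, Sym2.eq_swap]⟩
    · obtain ⟨rfl, h | h⟩ := (adj_inr_inr ..).1 he
      · exact .inr ⟨i, a, b, h, rfl⟩
      · exact .inr ⟨i, b, a, h, Sym2.eq_swap⟩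

def branch : Unit ⊕ Fin k × Fin 4 → WithBot (Fin k) :=
  Sum.elim (fun _ => ⊥) (fun p => p.1)

/-- The center edges `v u_i` get `⊥`; the three edges of the path `u_i v_i w_i x_i` get `i`. -/
def edgeBranch : Sym2 (Unit ⊕ Fin k × Fin 4) → WithBot (Fin k) :=
  Sym2.lift ⟨fun a b => min (branch a) (branch b), fun _ _ => min_comm _ _⟩

theorem exists_eq_or_adj_of_edgeBranch_eq {e f : Sym2 (Unit ⊕ Fin k × Fin 4)}
    (he : e ∈ (T3star k).edgeSet) (hf : f ∈ (T3star k).edgeSet)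
    (h : edgeBranch e = edgeBranch f) :
    ∃ u ∈ e, ∃ w ∈ f, u = w ∨ (T3star k).Adj u w := by
  have path_close : ∀ a b c d : Fin 4, (a : ℕ) + 1 = b → (c : ℕ) + 1 = d →
      ∃ x ∈ s(a, b), ∃ y ∈ s(c, d), x = y ∨ (x : ℕ) + 1 = y ∨ (y : ℕ) + 1 = x := by
    decide
  rcases edge_cases he with ⟨i, rfl⟩ | ⟨i, a, b, hab, rfl⟩ <;>
    rcases edge_cases hf with ⟨i', rfl⟩ | ⟨i', c, d, hcd, rfl⟩ <;>
    simp only [edgeBranch, branch, Sym2.lift_mk, Sum.elim_inl, Sum.elim_inr, min_self,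
      bot_le, min_eq_left, WithBot.bot_ne_coe, WithBot.coe_ne_bot, WithBot.coe_inj] at h
  · exact ⟨_, Sym2.mem_mk_left _ _, _, Sym2.mem_mk_left _ _, .inl rfl⟩
  · subst h
    obtain ⟨x, hx, y, hy, hxy⟩ := path_close a b c d hab hcd
    refine ⟨.inr (i, x), ?_, .inr (i, y), ?_, ?_⟩
    · simpa using hx
    · simpa using hy
    · simp only [Sum.inr.injEq, Prod.mk.injEq, true_and, adj_inr_inr]
      exact hxy

theorem card_le_of_isInducedMatching {M : Finset (Sym2 (Unit ⊕ Fin k × Fin 4))}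
    (hM : isInducedMatching (T3star k) M) : M.card ≤ k + 1 :=
  (hM.card_le fun _ he _ hf => exists_eq_or_adj_of_edgeBranch_eq he hf).trans_eq
    (Fintype.card_option.trans (by simp))

def depth : Unit ⊕ Fin k × Fin 4 → ℕ :=
  Sum.elim (fun _ => 0) (fun p => p.2 + 1)

theorem depth_le_of_adj {u w : Unit ⊕ Fin k × Fin 4} (h : (T3star k).Adj u w) :
    depth w ≤ depth u + 1 := by
  rcases u with ⟨⟨⟩⟩ | ⟨i, a⟩ <;> rcases w with ⟨⟨⟩⟩ | ⟨i', b⟩ <;> simp_all [depth]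
  omega

theorem ne_and_not_adj_of_depth {u w : Unit ⊕ Fin k × Fin 4} (h : depth u + 2 ≤ depth w) :
    u ≠ w ∧ ¬ (T3star k).Adj u w :=
  ⟨by rintro rfl; omega, fun hadj => by have := depth_le_of_adj hadj; omega⟩

theorem ne_and_not_adj_of_ne {i i' : Fin k} (h : i ≠ i') (a b : Fin 4) :
    (Sum.inr (i, a) : Unit ⊕ Fin k × Fin 4) ≠ .inr (i', b) ∧
      ¬ (T3star k).Adj (.inr (i, a)) (.inr (i', b)) := by
  simp [h]

def leafEdge (i : Fin k) : Sym2 (Unit ⊕ Fin k × Fin 4) := s(.inr (i, 2), .inr (i, 3))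

theorem leafEdge_injective : Function.Injective (leafEdge (k := k)) := by
  intro i i' h
  simpa [leafEdge] using h

def centerLeafMatching (i : Fin k) : Finset (Sym2 (Unit ⊕ Fin k × Fin 4)) :=
  insert s(.inl (), .inr (i, 0)) (Finset.univ.image leafEdge)

theorem isInducedMatching_centerLeafMatching (i : Fin k) :
    isInducedMatching (T3star k) (centerLeafMatching i) := by
  have hcenter_leaf : ∀ j, edgesSeparated (T3star k) s(.inl (), .inr (i, 0)) (leafEdge j) := by
    intro j u hu w hw
    apply ne_and_not_adj_of_depth
    rw [Sym2.mem_iff] at hu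
    rw [leafEdge, Sym2.mem_iff] at hw
    rcases hu with rfl | rfl <;> rcases hw with rfl | rfl <;> simp [depth]
  have hleaf : Pairwise fun j j' => edgesSeparated (T3star k) (leafEdge j) (leafEdge j') := by
    intro j j' hj u hu w hw
    rw [leafEdge, Sym2.mem_iff] at hu hw
    rcases hu with rfl | rfl <;> rcases hw with rfl | rfl <;> exact ne_and_not_adj_of_ne hj _ _
  rw [isInducedMatching_iff, centerLeafMatching, Finset.coe_insert, Finset.coe_image,
    Finset.coe_univ, Set.image_univ]
  refine ⟨Set.insert_subset_iff.2 ⟨by simp, ?_⟩, hleaf.range_pairwise.insert ?_⟩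
  · rintro _ ⟨j, rfl⟩
    simp [leafEdge]
  · rintro _ ⟨j, rfl⟩ -
    exact ⟨hcenter_leaf j, (hcenter_leaf j).symm⟩

theorem card_centerLeafMatching (i : Fin k) : (centerLeafMatching i).card = k + 1 := by
  rw [centerLeafMatching, Finset.card_insert_of_notMem, Finset.card_image_of_injective _
    leafEdge_injective, Finset.card_univ, Fintype.card_fin]
  simp [leafEdge]

end T3star

/-- For `k ≥ 4`, `ν_I(T_k) = k + 1` for the thrice-subdivided star. -/
theorem stmt13 (k : ℕ) (hk : 4 ≤ k) : inducedMatchingNum (T3star k) = k + 1 :=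
  inducedMatchingNum_eq (fun _ => T3star.card_le_of_isInducedMatching)
    (T3star.isInducedMatching_centerLeafMatching ⟨0, by omega⟩)
    (T3star.card_centerLeafMatching _)
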